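/- Let λ ≥ 1 be an integer, M = 2^λ, and let n_A, n_B ≥ 1 and 2 ≤ k ≤ n_A + n_B. The number of distinct one-dimensional subspaces of ℂ^{n_A+n_B} (with coordinates indexed by Fin n_A ⊕ Fin n_B) of the form span ℂ {x}, where x ranges over vectors all of whose entries lie in the difference constellation ΔS of the M-PSK signal set, whose restriction to the Fin n_A coordinates is nonzero, whose restriction to the Fin n_B coordinates is nonzero, and which have exactly k nonzero entries, equals (C(n_A+n_B, k) − C(n_A, k) − C(n_B, k))·((M/2)^k − M/2 + 1)·M^{k−1}, where C(a,b) = 0 when b > a. (These spans are, up to taking orthogonal complements, exactly the removable singular fade subspaces arising from difference vectors with k nonzero components.) -/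

import Mathlib

/-- The `M`-PSK signal set `{exp(I·(2k+1)·π/M) : 0 ≤ k < M}`. -/
def pskSet (M : ℕ) : Set ℂ :=
  {z | ∃ k : ℕ, k < M ∧ z = Complex.exp (Complex.I * (2 * (k : ℂ) + 1) * (Real.pi : ℂ) / (M : ℂ))}

/-- The difference constellation `ΔS = {s - s' : s, s' ∈ S}`. -/
def diffSet (M : ℕ) : Set ℂ := {z | ∃ s ∈ pskSet M, ∃ s' ∈ pskSet M, z = s - s'}

/-!
Write `ζ = e^{πi/M}`, so that `S = {ζ^{2t+1}}`. Every nonzero point of `ΔS` is uniquely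
`(ζ^{2d} - 1) ζ^{2t+1}` with a *type* `1 ≤ d ≤ M/2` and a *phase* `t < M`; the type is read off
the modulus `2 sin (π d / M)`. A vector with support `T` spans the same line as `c • x` for all
`c ≠ 0`, and such a rescaling stays in `ΔS^T` in two ways only: rotating all phases by a common
`ζ^{2u}`, or, when all types are equal to `d`, the scaling `(ζ^2 - 1)/(ζ^{2d} - 1)` to type `1`.
That nothing else happens is the number-theoretic heart: for `M = 2^λ`, the degree of `ζ` over `ℚ`
is `φ(2M) = M`, and a relation `cos a - cos b = cos c - cos d` between multiples of `π / M` forces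
`a + d = b + c`. Via `2 sin p sin q = cos (q - p) - cos (q + p)` this makes a product
`sin (π p/M) sin (π q/M)` determine `{p, q}`, hence a scalar mapping two different types to
types must preserve both and be unimodular. Normalising the phase at one coordinate of `T` and
constant type vectors to type `1` gives `((M/2)^k - M/2 + 1) M^{k-1}` lines per support, and
there are `C(n_A+n_B, k) - C(n_A, k) - C(n_B, k)` supports meeting both blocks.
-/

open Polynomial Real

variable {M l : ℕ}

noncomputable def pskZeta (M : ℕ) : ℂ := Complex.exp (π * Complex.I / M)

lemma pskZeta_pow (M n : ℕ) : pskZeta M ^ n = Complex.exp (↑(π * n / M) * Complex.I) := by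
  rw [pskZeta, ← Complex.exp_nat_mul]; push_cast; ring_nf

lemma isPrimitiveRoot_pskZeta (hM : M ≠ 0) : IsPrimitiveRoot (pskZeta M) (2 * M) := by
  convert Complex.isPrimitiveRoot_exp (2 * M) (by positivity) using 1
  rw [pskZeta]; push_cast; field_simp

lemma pskZeta_pow_self (hM : M ≠ 0) : pskZeta M ^ M = -1 := by
  rw [pskZeta_pow, show π * M / M = π by field_simp]; exact Complex.exp_pi_mul_I

lemma pskZeta_pow_mod (hM : M ≠ 0) (a b : ℕ) :
    pskZeta M ^ (2 * (a % M) + b) = pskZeta M ^ (2 * a + b) := by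
  have : 2 * a + b = 2 * M * (a / M) + (2 * (a % M) + b) := by
    have := Nat.div_add_mod a M; linarith
  rw [this, pow_add _ (2 * M * (a / M)), pow_mul _ (2 * M), (isPrimitiveRoot_pskZeta hM).pow_eq_one,
    one_pow, one_mul]

lemma pskZeta_pow_sub_one_ne_zero {d : ℕ} (hd0 : 0 < d) (hd : d < M) :
    pskZeta M ^ (2 * d) - 1 ≠ 0 :=
  sub_ne_zero.2 ((isPrimitiveRoot_pskZeta (by omega)).pow_ne_one_of_pos_of_lt (by omega) (by omega))

lemma sin_pi_mul_div_nonneg {d : ℕ} (hd : d ≤ M) : 0 ≤ sin (π * d / M) := by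
  rcases Nat.eq_zero_or_pos M with rfl | hM
  · simp
  refine sin_nonneg_of_nonneg_of_le_pi (by positivity) ?_
  rw [div_le_iff₀ (by positivity)]
  exact mul_le_mul_of_nonneg_left (by exact_mod_cast hd) pi_pos.le

lemma sin_pi_mul_div_pos {d : ℕ} (hd0 : 0 < d) (hd : d < M) : 0 < sin (π * d / M) := by
  have hd0' : (0 : ℝ) < d := by exact_mod_cast hd0
  have hM : (0 : ℝ) < M := by exact_mod_cast hd0.trans hd
  refine sin_pos_of_pos_of_lt_pi (by positivity) ?_
  rw [div_lt_iff₀ hM]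
  exact mul_lt_mul_of_pos_left (by exact_mod_cast hd) pi_pos

lemma eq_of_sin_pi_mul_div_eq {d d' : ℕ} (hd : 2 * d ≤ M) (hd' : 2 * d' ≤ M)
    (h : sin (π * d / M) = sin (π * d' / M)) : d = d' := by
  rcases Nat.eq_zero_or_pos M with rfl | hM
  · omega
  have mem_Icc : ∀ n : ℕ, 2 * n ≤ M → π * n / M ∈ Set.Icc (-(π / 2)) (π / 2) := fun n hn => by
    refine ⟨by linarith [pi_pos, (by positivity : 0 ≤ π * n / M)], ?_⟩
    rw [div_le_iff₀ (by positivity)]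
    have : (2 * n : ℝ) ≤ M := by exact_mod_cast hn
    nlinarith [pi_pos]
  have := injOn_sin (mem_Icc d hd) (mem_Icc d' hd') h
  field_simp at this
  exact_mod_cast this

lemma norm_pskZeta_pow_sub_one {d : ℕ} (hd : d ≤ M) :
    ‖pskZeta M ^ (2 * d) - 1‖ = 2 * sin (π * d / M) := by
  rw [pskZeta_pow, mul_comm, Complex.norm_exp_I_mul_ofReal_sub_one]
  have hx : π * (2 * d : ℕ) / M / 2 = π * d / M := by push_cast; ring
  rw [hx, Real.norm_eq_abs, abs_of_nonneg (mul_nonneg zero_le_two (sin_pi_mul_div_nonneg hd))]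

lemma IsPrimitiveRoot.eq_zero_of_aeval_eq_zero {K : Type*} [Field K] [CharZero K] {n : ℕ}
    {μ : K} (hμ : IsPrimitiveRoot μ n) (hn : 0 < n) {p : ℚ[X]} (hdeg : p.natDegree < n.totient)
    (hp : aeval μ p = 0) : p = 0 := by
  by_contra hp0
  have := natDegree_le_natDegree (minpoly.degree_le_of_ne_zero ℚ μ hp0 hp)
  rw [← cyclotomic_eq_minpoly_rat hμ hn, natDegree_cyclotomic] at this
  omega

-- `2 cos (π m / M) = ζ^m - ζ^(M-m)` since `ζ^M = -1`; the endpoints `m = 0, M` are special-cased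
-- to keep the degree below `M`.
noncomputable def cosPoly (M m : ℕ) : ℚ[X] :=
  if m = 0 then 2 else if m = M then -2 else X ^ m - X ^ (M - m)

lemma aeval_cosPoly {m : ℕ} (hM : M ≠ 0) (hm : m ≤ M) :
    aeval (pskZeta M) (cosPoly M m) = 2 * cos (π * m / M) := by
  have two_cos : 2 * (cos (π * m / M) : ℂ) = pskZeta M ^ m + (pskZeta M ^ m)⁻¹ := by
    rw [pskZeta_pow, ← Complex.exp_neg, Complex.ofReal_cos, Complex.two_cos]; ring_nf
  rw [two_cos]
  unfold cosPoly
  split_ifs with h0 hM'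
  · subst h0; rw [map_ofNat]; norm_num
  · subst hM'; rw [pskZeta_pow_self hM, map_neg, map_ofNat]; norm_num
  · have : pskZeta M ^ (M - m) = -(pskZeta M ^ m)⁻¹ := by
      have h : pskZeta M ^ (M - m) * pskZeta M ^ m = -1 := by
        rw [pow_sub_mul_pow _ hm, pskZeta_pow_self hM]
      have : pskZeta M ^ m ≠ 0 := pow_ne_zero _ (Complex.exp_ne_zero _)
      field_simp
      linear_combination h
    simp [this]

lemma natDegree_cosPoly_lt {m : ℕ} (hM : M ≠ 0) (hm : m ≤ M) : (cosPoly M m).natDegree < M := by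
  unfold cosPoly
  split_ifs with h0 hM'
  · simpa using Nat.pos_of_ne_zero hM
  · simpa using Nat.pos_of_ne_zero hM
  · refine (natDegree_sub_le _ _).trans_lt ?_
    simp only [natDegree_X_pow]; omega

lemma eval_one_derivative_sub_coeff_zero_cosPoly {m : ℕ} (hm : m ≤ M) :
    (cosPoly M m).derivative.eval 1 - M / 2 * (cosPoly M m).coeff 0 = 2 * m - M := by
  unfold cosPoly
  split_ifs with h0 hM'
  · subst h0; simp
  · subst hM'
    simp only [derivative_neg, derivative_ofNat, neg_zero, eval_zero, coeff_neg, coeff_ofNat_zero]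
    ring
  · rw [coeff_sub, coeff_X_pow, coeff_X_pow, if_neg (Ne.symm h0), if_neg (by omega)]
    rw [derivative_sub, derivative_X_pow, derivative_X_pow]
    simp only [map_natCast, Nat.cast_sub hm, map_sub, eval_sub, eval_mul, eval_natCast, eval_pow,
      eval_X, one_pow, mul_one, sub_self, mul_zero, sub_zero]
    ring

-- `ζ` has degree `φ(2M) = M` over `ℚ`, so the relation lifts to an identity in `ℚ[X]`, from which
-- the functional `f ↦ f'(1) - (M/2) f(0)` reads off the indices.
lemma add_eq_add_of_cos_sub_cos_eq (hM : M = 2 ^ l) {a b c d : ℕ} (ha : a ≤ M) (hb : b ≤ M)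
    (hc : c ≤ M) (hd : d ≤ M)
    (h : cos (π * a / M) - cos (π * b / M) = cos (π * c / M) - cos (π * d / M)) :
    a + d = b + c := by
  have hM0 : M ≠ 0 := by rw [hM]; positivity
  set p := cosPoly M a - cosPoly M b - cosPoly M c + cosPoly M d
  have hroot : aeval (pskZeta M) p = 0 := by
    simp only [p, map_add, map_sub, aeval_cosPoly hM0 ha, aeval_cosPoly hM0 hb,
      aeval_cosPoly hM0 hc, aeval_cosPoly hM0 hd]
    have := congrArg Complex.ofReal h
    simp only [Complex.ofReal_sub] at this
    linear_combination 2 * this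
  have hdeg : p.natDegree < (2 * M).totient := by
    rw [hM, ← pow_succ', Nat.totient_prime_pow_succ Nat.prime_two, ← hM]
    simp only [Nat.add_one_sub_one, mul_one]
    exact (natDegree_add_le _ _).trans_lt <| max_lt ((natDegree_sub_le _ _).trans_lt <|
      max_lt ((natDegree_sub_le _ _).trans_lt <| max_lt (natDegree_cosPoly_lt hM0 ha)
        (natDegree_cosPoly_lt hM0 hb)) (natDegree_cosPoly_lt hM0 hc)) (natDegree_cosPoly_lt hM0 hd)
  have hp := (isPrimitiveRoot_pskZeta hM0).eq_zero_of_aeval_eq_zero (by omega) hdeg hroot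
  have key := congrArg (fun f : ℚ[X] => f.derivative.eval 1 - M / 2 * f.coeff 0) hp
  simp only [p, derivative_add, derivative_sub, eval_add, eval_sub, coeff_add, coeff_sub,
    derivative_zero, eval_zero, coeff_zero] at key
  have := eval_one_derivative_sub_coeff_zero_cosPoly (M := M) ha
  have := eval_one_derivative_sub_coeff_zero_cosPoly (M := M) hb
  have := eval_one_derivative_sub_coeff_zero_cosPoly (M := M) hc
  have := eval_one_derivative_sub_coeff_zero_cosPoly (M := M) hd
  have : (a + d : ℚ) = b + c := by linarith
  exact_mod_cast this

lemma two_mul_sin_mul_sin {p q : ℕ} (hpq : p ≤ q) :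
    2 * sin (π * p / M) * sin (π * q / M) =
      cos (π * (q - p : ℕ) / M) - cos (π * (q + p : ℕ) / M) := by
  rw [Nat.cast_sub hpq, Nat.cast_add, mul_sub, mul_add, sub_div, add_div, cos_sub,
    cos_add]
  ring

lemma eq_of_sin_mul_sin_eq (hM : M = 2 ^ l) {p q r w : ℕ} (hpq : p ≤ q) (hrw : r ≤ w)
    (hp : q + p ≤ M) (hr : w + r ≤ M)
    (h : sin (π * p / M) * sin (π * q / M) = sin (π * r / M) * sin (π * w / M)) :
    p = r := by
  have := add_eq_add_of_cos_sub_cos_eq hM (a := q - p) (b := q + p) (c := w - r) (d := w + r)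
    (by omega) hp (by omega) hr
    (by rw [← two_mul_sin_mul_sin hpq, ← two_mul_sin_mul_sin hrw]; linarith)
  omega

lemma min_max_eq_of_sin_mul_sin_eq (hM : M = 2 ^ l) {a b c d : ℕ} (ha : 0 < a) (hb : 0 < b)
    (ha' : 2 * a ≤ M) (hb' : 2 * b ≤ M) (hc : 2 * c ≤ M) (hd : 2 * d ≤ M)
    (h : sin (π * a / M) * sin (π * b / M) = sin (π * c / M) * sin (π * d / M)) :
    min a b = min c d ∧ max a b = max c d := by
  have sorted : ∀ x y : ℕ, sin (π * x / M) * sin (π * y / M) =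
      sin (π * (min x y : ℕ) / M) * sin (π * (max x y : ℕ) / M) := fun x y => by
    rcases le_total x y with hxy | hxy
    · rw [min_eq_left hxy, max_eq_right hxy]
    · rw [min_eq_right hxy, max_eq_left hxy, mul_comm]
  rw [sorted a b, sorted c d] at h
  have hmin := eq_of_sin_mul_sin_eq hM (min_le_max) (min_le_max) (by omega) (by omega) h
  rw [hmin] at h
  have hpos : 0 < sin (π * (min c d : ℕ) / M) := sin_pi_mul_div_pos (by omega) (by omega)
  exact ⟨hmin, eq_of_sin_pi_mul_div_eq (by omega) (by omega) (mul_left_cancel₀ hpos.ne' h)⟩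

lemma mem_pskSet_iff {z : ℂ} : z ∈ pskSet M ↔ ∃ t < M, z = pskZeta M ^ (2 * t + 1) := by
  have h : ∀ t : ℕ, Complex.exp (Complex.I * (2 * (t : ℂ) + 1) * (π : ℂ) / (M : ℂ)) =
      pskZeta M ^ (2 * t + 1) := fun t => by
    rw [pskZeta, ← Complex.exp_nat_mul]; push_cast; ring_nf
  simp only [pskSet, Set.mem_ofPred_eq, h]

-- The point of `ΔS` of type `d` and phase `t`.
noncomputable def pskDiff (M d t : ℕ) : ℂ := (pskZeta M ^ (2 * d) - 1) * pskZeta M ^ (2 * t + 1)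

lemma pskDiff_eq_sub (M d t : ℕ) :
    pskDiff M d t = pskZeta M ^ (2 * (d + t) + 1) - pskZeta M ^ (2 * t + 1) := by
  rw [pskDiff, sub_mul, one_mul, ← pow_add]; ring_nf

lemma pskDiff_mem_diffSet (hM : M ≠ 0) (d t : ℕ) : pskDiff M d t ∈ diffSet M := by
  refine ⟨_, mem_pskSet_iff.2 ⟨(d + t) % M, Nat.mod_lt _ (by omega), rfl⟩,
    _, mem_pskSet_iff.2 ⟨t % M, Nat.mod_lt _ (by omega), rfl⟩, ?_⟩
  rw [pskZeta_pow_mod hM, pskZeta_pow_mod hM, pskDiff_eq_sub]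

lemma zero_mem_diffSet (hM : M ≠ 0) : (0 : ℂ) ∈ diffSet M :=
  ⟨pskZeta M ^ (2 * 0 + 1), mem_pskSet_iff.2 ⟨0, Nat.pos_of_ne_zero hM, rfl⟩, _,
    mem_pskSet_iff.2 ⟨0, Nat.pos_of_ne_zero hM, rfl⟩, (sub_self _).symm⟩

lemma norm_pskDiff {d : ℕ} (hd : d ≤ M) (t : ℕ) : ‖pskDiff M d t‖ = 2 * sin (π * d / M) := by
  rw [pskDiff, norm_mul, norm_pskZeta_pow_sub_one hd, pskZeta_pow, Complex.norm_exp_ofReal_mul_I,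
    mul_one]

lemma pskDiff_ne_zero {d : ℕ} (hd0 : 0 < d) (hd : d < M) (t : ℕ) : pskDiff M d t ≠ 0 :=
  mul_ne_zero (pskZeta_pow_sub_one_ne_zero hd0 hd) (pow_ne_zero _ (Complex.exp_ne_zero _))

lemma pskZeta_pow_mul_pskDiff (hM : M ≠ 0) (u d t : ℕ) :
    pskZeta M ^ (2 * u) * pskDiff M d t = pskDiff M d ((t + u) % M) := by
  rw [pskDiff, pskDiff, pskZeta_pow_mod hM, mul_left_comm, ← pow_add]; ring_nf

lemma neg_pskDiff (hM : Even M) (hM0 : M ≠ 0) (d t : ℕ) :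
    -pskDiff M d t = pskDiff M d ((t + M / 2) % M) := by
  rw [← pskZeta_pow_mul_pskDiff hM0, Nat.two_mul_div_two_of_even hM, pskZeta_pow_self hM0,
    neg_one_mul]

lemma pskDiff_sub_add (hM : M ≠ 0) {d : ℕ} (hd : d ≤ M) (t : ℕ) :
    pskDiff M (M - d) (t + d) = -pskDiff M d t := by
  have : pskZeta M ^ (2 * (M - d + (t + d)) + 1) = pskZeta M ^ (2 * t + 1) := by
    rw [show 2 * (M - d + (t + d)) + 1 = M * 2 + (2 * t + 1) by omega, pow_add, pow_mul,
      pskZeta_pow_self hM]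
    ring
  rw [pskDiff_eq_sub, pskDiff_eq_sub, this, add_comm d t]
  ring

lemma exists_pskDiff_eq (hM : Even M) (hM0 : M ≠ 0) {z : ℂ} (hz : z ∈ diffSet M) (hz0 : z ≠ 0) :
    ∃ d t, 1 ≤ d ∧ 2 * d ≤ M ∧ t < M ∧ pskDiff M d t = z := by
  obtain ⟨_, hs, _, hs', rfl⟩ := hz
  obtain ⟨a, ha, rfl⟩ := mem_pskSet_iff.1 hs
  obtain ⟨b, hb, rfl⟩ := mem_pskSet_iff.1 hs'
  obtain ⟨δ, hδ0, hδM, hδ⟩ : ∃ δ, 0 < δ ∧ δ < M ∧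
      pskDiff M δ b = pskZeta M ^ (2 * a + 1) - pskZeta M ^ (2 * b + 1) := by
    rcases lt_trichotomy a b with hab | rfl | hab
    · obtain ⟨e, rfl⟩ : ∃ e, b = a + e := ⟨b - a, by omega⟩
      refine ⟨M - e, by omega, by omega, ?_⟩
      rw [pskDiff_sub_add hM0 (by omega), pskDiff_eq_sub, add_comm e a, neg_sub]
    · exact absurd (sub_self _) hz0
    · refine ⟨a - b, by omega, by omega, ?_⟩
      rw [pskDiff_eq_sub, Nat.sub_add_cancel hab.le]
  -- otherwise negate: the type becomes `M - δ` and the phase shifts by `M / 2`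
  by_cases hδ2 : 2 * δ ≤ M
  · exact ⟨δ, b, hδ0, hδ2, hb, hδ⟩
  · refine ⟨M - δ, (b + δ + M / 2) % M, by omega, by omega, Nat.mod_lt _ (by omega), ?_⟩
    rw [← neg_pskDiff hM hM0, pskDiff_sub_add hM0 hδM.le, neg_neg, hδ]

lemma eq_and_eq_of_pskDiff_eq {d d' t t' : ℕ} (hd0 : 0 < d) (hd : 2 * d ≤ M) (hd' : 2 * d' ≤ M)
    (ht : t < M) (ht' : t' < M) (h : pskDiff M d t = pskDiff M d' t') : d = d' ∧ t = t' := by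
  have hdd : d = d' := by
    have := congrArg norm h
    rw [norm_pskDiff (by omega), norm_pskDiff (by omega)] at this
    exact eq_of_sin_pi_mul_div_eq hd hd' (by linarith)
  subst hdd
  have := (isPrimitiveRoot_pskZeta (M := M) (by omega)).pow_inj (i := 2 * t + 1) (j := 2 * t' + 1)
    (by omega) (by omega) (mul_left_cancel₀ (pskZeta_pow_sub_one_ne_zero hd0 (by omega)) h)
  exact ⟨rfl, by omega⟩

lemma div_mul_pskDiff {d : ℕ} (hd0 : 0 < d) (hd : d < M) (e t : ℕ) :
    (pskZeta M ^ (2 * e) - 1) / (pskZeta M ^ (2 * d) - 1) * pskDiff M d t = pskDiff M e t := by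
  have := pskZeta_pow_sub_one_ne_zero hd0 hd
  rw [pskDiff, pskDiff]
  field_simp

section Vectors

variable {ι : Type*}

def diffLines (M : ℕ) (T : Finset ι) : Set (Submodule ℂ (ι → ℂ)) :=
  {W | ∃ x : ι → ℂ, (∀ i, x i ∈ diffSet M) ∧ (∀ i, x i ≠ 0 ↔ i ∈ T) ∧ W = Submodule.span ℂ {x}}

open Function in
lemma pairwise_disjoint_diffLines (M : ℕ) : Pairwise (Disjoint on diffLines (ι := ι) M) := by
  intro T T' hne
  refine Set.disjoint_left.2 ?_
  rintro W ⟨x, -, hx, rfl⟩ ⟨y, -, hy, hxy⟩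
  obtain ⟨c, rfl⟩ := Submodule.span_singleton_eq_span_singleton.1 hxy
  exact hne (Finset.ext fun i => by simp [← hx i, ← hy i, Units.smul_def, c.ne_zero])

variable [DecidableEq ι]

noncomputable def pskVec (M : ℕ) (T : Finset ι) (τ φ : ι → ℕ) : ι → ℂ :=
  fun i => if i ∈ T then pskDiff M (τ i) (φ i) else 0

lemma pskVec_mem_diffSet (hM : M ≠ 0) (T : Finset ι) (τ φ : ι → ℕ) (i : ι) :
    pskVec M T τ φ i ∈ diffSet M := by
  unfold pskVec
  split_ifs
  exacts [pskDiff_mem_diffSet hM _ _, zero_mem_diffSet hM]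

variable [Fintype ι]

def piOn {α : Type*} [Zero α] (T : Finset ι) (s : Finset α) : Finset (ι → α) :=
  Fintype.piFinset fun i => if i ∈ T then s else {0}

lemma mem_piOn {α : Type*} [Zero α] {T : Finset ι} {s : Finset α} {f : ι → α} :
    f ∈ piOn T s ↔ (∀ i ∈ T, f i ∈ s) ∧ ∀ i ∉ T, f i = 0 := by
  simp only [piOn, Fintype.mem_piFinset]
  refine ⟨fun h => ⟨fun i hi => by simpa [hi] using h i, fun i hi => by simpa [hi] using h i⟩,
    fun h i => ?_⟩
  split_ifs with hi
  exacts [h.1 i hi, Finset.mem_singleton.2 (h.2 i hi)]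

lemma card_piOn {α : Type*} [Zero α] (T : Finset ι) (s : Finset α) :
    (piOn T s).card = s.card ^ T.card := by
  simp [piOn, apply_ite Finset.card, Finset.prod_ite_mem]

def normalTypes (M : ℕ) (T : Finset ι) : Finset (ι → ℕ) :=
  (piOn T (Finset.Icc 1 (M / 2))).filter
    fun τ => (∀ i ∈ T, ∀ j ∈ T, τ i = τ j) → ∀ i ∈ T, τ i = 1

lemma card_normalTypes (M : ℕ) {T : Finset ι} (hT : T.Nonempty) :
    (normalTypes M T).card = (M / 2) ^ T.card - (M / 2 - 1) := by
  obtain ⟨i0, hi0⟩ := hT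
  let constOn : ℕ → ι → ℕ := fun v i => if i ∈ T then v else 0
  have hsub : (Finset.Icc 2 (M / 2)).image constOn ⊆ piOn T (Finset.Icc 1 (M / 2)) := by
    simp only [Finset.image_subset_iff, Finset.mem_Icc, mem_piOn]
    intro v hv
    exact ⟨fun i hi => by simp only [constOn, hi, if_true]; omega,
      fun i hi => by simp [constOn, hi]⟩
  have hinj : Set.InjOn constOn (Finset.Icc 2 (M / 2)) := fun v _ w _ h => by
    simpa [constOn, hi0] using congrFun h i0
  have heq : normalTypes M T =
      piOn T (Finset.Icc 1 (M / 2)) \ (Finset.Icc 2 (M / 2)).image constOn := by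
    ext τ
    simp only [normalTypes, Finset.mem_filter, Finset.mem_sdiff, Finset.mem_image, Finset.mem_Icc]
    refine and_congr_right fun hτ => ⟨?_, fun hnot hconst => ?_⟩
    · rintro h ⟨v, hv, rfl⟩
      have := h (fun i hi j hj => by simp [constOn, hi, hj]) i0 hi0
      simp only [constOn, hi0, if_true] at this
      omega
    · have hτ0 := (mem_piOn.1 hτ).1 i0 hi0
      rw [Finset.mem_Icc] at hτ0
      have hval : ∀ i ∈ T, τ i = τ i0 := fun i hi => hconst i hi i0 hi0
      by_contra hne
      refine hnot ⟨τ i0, ⟨?_, hτ0.2⟩, funext fun i => ?_⟩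
      · by_contra h1
        exact hne fun i hi => by rw [hval i hi]; omega
      · by_cases hi : i ∈ T
        · simp [constOn, hi, hval i hi]
        · simp [constOn, hi, (mem_piOn.1 hτ).2 i hi]
  rw [heq, Finset.card_sdiff_of_subset hsub, card_piOn, Finset.card_image_of_injOn hinj,
    Nat.card_Icc, Nat.card_Icc, Nat.add_sub_cancel]
  omega

lemma bounds_of_mem_normalTypes {T : Finset ι} {τ : ι → ℕ} (hτ : τ ∈ normalTypes M T) {i : ι}
    (hi : i ∈ T) : 1 ≤ τ i ∧ 2 * τ i ≤ M := by
  have := Finset.mem_Icc.1 ((mem_piOn.1 (Finset.mem_filter.1 hτ).1).1 i hi)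
  omega

lemma pskVec_ne_zero_iff {T : Finset ι} {τ : ι → ℕ} (hτ : τ ∈ piOn T (Finset.Icc 1 (M / 2)))
    (φ : ι → ℕ) (i : ι) : pskVec M T τ φ i ≠ 0 ↔ i ∈ T := by
  by_cases hi : i ∈ T
  · have := Finset.mem_Icc.1 ((mem_piOn.1 hτ).1 i hi)
    simpa [pskVec, hi] using pskDiff_ne_zero (M := M) (by omega) (by omega) (φ i)
  · simp [pskVec, hi]

lemma exists_pskVec_eq (hM : Even M) (hM0 : M ≠ 0) {T : Finset ι} {x : ι → ℂ}
    (hx : ∀ i, x i ∈ diffSet M) (hT : ∀ i, x i ≠ 0 ↔ i ∈ T) :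
    ∃ τ ∈ piOn T (Finset.Icc 1 (M / 2)), ∃ φ ∈ piOn T (Finset.range M), pskVec M T τ φ = x := by
  have : ∀ i, ∃ p : ℕ × ℕ, p.1 ∈ (if i ∈ T then Finset.Icc 1 (M / 2) else {0}) ∧
      p.2 ∈ (if i ∈ T then Finset.range M else {0}) ∧
      (if i ∈ T then pskDiff M p.1 p.2 else 0) = x i := fun i => by
    by_cases hi : i ∈ T
    · obtain ⟨d, t, hd1, hd, ht, h⟩ := exists_pskDiff_eq hM hM0 (hx i) ((hT i).2 hi)
      exact ⟨(d, t), by simp [hi]; omega, by simpa [hi] using ht, by simpa [hi] using h⟩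
    · exact ⟨(0, 0), by simp [hi], by simp [hi],
        by simpa [hi] using (not_ne_iff.1 (mt (hT i).1 hi)).symm⟩
  choose p hp₁ hp₂ hp₃ using this
  exact ⟨fun i => (p i).1, Fintype.mem_piFinset.2 hp₁, fun i => (p i).2,
    Fintype.mem_piFinset.2 hp₂, funext hp₃⟩

lemma exists_smul_pskVec_eq_normal_phases (hM0 : M ≠ 0) {T : Finset ι} {i0 : ι} (hi0 : i0 ∈ T)
    (τ : ι → ℕ) {φ : ι → ℕ} (hφ : φ ∈ piOn T (Finset.range M)) :
    ∃ c : ℂ, c ≠ 0 ∧ ∃ φ' ∈ piOn (T.erase i0) (Finset.range M),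
      c • pskVec M T τ φ = pskVec M T τ φ' := by
  have hφ0 := Finset.mem_range.1 ((mem_piOn.1 hφ).1 i0 hi0)
  refine ⟨pskZeta M ^ (2 * (M - φ i0)), pow_ne_zero _ (Complex.exp_ne_zero _),
    fun i => if i ∈ T then (φ i + (M - φ i0)) % M else 0,
    mem_piOn.2 ⟨fun i hi => ?_, fun i hi => ?_⟩, funext fun i => ?_⟩
  · simp [(Finset.mem_erase.1 hi).2, Nat.mod_lt _ (Nat.pos_of_ne_zero hM0)]
  · by_cases hiT : i ∈ T
    · have : i = i0 := by simpa [hiT] using hi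
      simp [this, hi0, Nat.add_sub_cancel' hφ0.le]
    · simp [hiT]
  · by_cases hi : i ∈ T
    · simp [pskVec, hi, pskZeta_pow_mul_pskDiff hM0]
    · simp [pskVec, hi]

lemma exists_smul_pskVec_eq_normal_types {T : Finset ι} {i0 : ι} (hi0 : i0 ∈ T) {τ : ι → ℕ}
    (hτ : τ ∈ piOn T (Finset.Icc 1 (M / 2))) (φ : ι → ℕ) :
    ∃ c : ℂ, c ≠ 0 ∧ ∃ τ' ∈ normalTypes M T, c • pskVec M T τ φ = pskVec M T τ' φ := by
  by_cases hconst : ∀ i ∈ T, ∀ j ∈ T, τ i = τ j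
  · have hτ0 := Finset.mem_Icc.1 ((mem_piOn.1 hτ).1 i0 hi0)
    refine ⟨(pskZeta M ^ (2 * 1) - 1) / (pskZeta M ^ (2 * τ i0) - 1), ?_,
      fun i => if i ∈ T then 1 else 0, ?_, funext fun i => ?_⟩
    · exact div_ne_zero (pskZeta_pow_sub_one_ne_zero (by omega) (by omega))
        (pskZeta_pow_sub_one_ne_zero (by omega) (by omega))
    · refine Finset.mem_filter.2 ⟨mem_piOn.2 ⟨fun i hi => ?_, fun i hi => by simp [hi]⟩,
        fun _ i hi => by simp [hi]⟩
      simp only [hi, if_true, Finset.mem_Icc]; omega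
    · by_cases hi : i ∈ T
      · simp only [pskVec, hi, if_true, Pi.smul_apply, smul_eq_mul]
        rw [hconst i hi i0 hi0, div_mul_pskDiff (by omega) (by omega)]
      · simp [pskVec, hi]
  · exact ⟨1, one_ne_zero, τ, Finset.mem_filter.2 ⟨hτ, fun h => absurd h hconst⟩, one_smul _ _⟩

lemma eq_one_of_mul_sin_eq (hM : M = 2 ^ l) {T : Finset ι} {i0 : ι} (hi0 : i0 ∈ T)
    {τ τ' : ι → ℕ} (hτ : τ ∈ normalTypes M T) (hτ' : τ' ∈ normalTypes M T) {r : ℝ}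
    (h : ∀ i ∈ T, r * sin (π * τ i / M) = sin (π * τ' i / M)) : r = 1 := by
  have hb := fun {i} (hi : i ∈ T) => bounds_of_mem_normalTypes hτ hi
  have hb' := fun {i} (hi : i ∈ T) => bounds_of_mem_normalTypes hτ' hi
  have cancel : ∀ i ∈ T, τ' i = τ i → r = 1 := fun i hi hii => by
    have hpos : 0 < sin (π * τ i / M) := sin_pi_mul_div_pos (hb hi).1 (by have := hb hi; omega)
    have := h i hi
    rw [hii] at this
    exact mul_right_cancel₀ hpos.ne' (this.trans (one_mul _).symm)
  by_cases hconst : ∀ i ∈ T, ∀ j ∈ T, τ i = τ j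
  · have h1 := (Finset.mem_filter.1 hτ).2 hconst
    have hconst' : ∀ i ∈ T, ∀ j ∈ T, τ' i = τ' j := fun i hi j hj =>
      eq_of_sin_pi_mul_div_eq (hb' hi).2 (hb' hj).2 (by rw [← h i hi, ← h j hj, h1 i hi, h1 j hj])
    exact cancel i0 hi0 (by rw [h1 i0 hi0, (Finset.mem_filter.1 hτ').2 hconst' i0 hi0])
  · push Not at hconst
    obtain ⟨i, hi, j, hj, hij⟩ := hconst
    -- with `τ i ≠ τ j`, the multiset identity `{τ' i, τ j} = {τ' j, τ i}` forces `τ' i = τ i`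
    have hcross : sin (π * τ' i / M) * sin (π * τ j / M) =
        sin (π * τ' j / M) * sin (π * τ i / M) := by
      rw [← h i hi, ← h j hj]; ring
    have := min_max_eq_of_sin_mul_sin_eq hM (hb' hi).1 (hb hj).1 (hb' hi).2 (hb hj).2 (hb' hj).2
      (hb hi).2 hcross
    exact cancel i hi (by omega)

lemma eq_of_smul_pskVec_eq (hM : M = 2 ^ l) {T : Finset ι} {i0 : ι} (hi0 : i0 ∈ T)
    {τ τ' φ φ' : ι → ℕ} (hτ : τ ∈ normalTypes M T) (hτ' : τ' ∈ normalTypes M T)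
    (hφ : φ ∈ piOn (T.erase i0) (Finset.range M)) (hφ' : φ' ∈ piOn (T.erase i0) (Finset.range M))
    {c : ℂ} (h : c • pskVec M T τ φ = pskVec M T τ' φ') : τ = τ' ∧ φ = φ' := by
  have hb := fun {i} (hi : i ∈ T) => bounds_of_mem_normalTypes hτ hi
  have hb' := fun {i} (hi : i ∈ T) => bounds_of_mem_normalTypes hτ' hi
  have hlt : ∀ σ ∈ piOn (T.erase i0) (Finset.range M), ∀ i ∈ T, σ i < M := fun σ hσ i hi => by
    by_cases hi0' : i = i0
    · have := (mem_piOn.1 hσ).2 i (by simp [hi0'])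
      have := hb hi
      omega
    · exact Finset.mem_range.1 ((mem_piOn.1 hσ).1 i (Finset.mem_erase.2 ⟨hi0', hi⟩))
  have hentry : ∀ i ∈ T, c * pskDiff M (τ i) (φ i) = pskDiff M (τ' i) (φ' i) := fun i hi => by
    simpa [pskVec, hi] using congrFun h i
  have hsin : ∀ i ∈ T, ‖c‖ * sin (π * τ i / M) = sin (π * τ' i / M) := fun i hi => by
    have := congrArg norm (hentry i hi)
    rw [norm_mul, norm_pskDiff (by have := hb hi; omega),
      norm_pskDiff (by have := hb' hi; omega)] at this
    linarith
  have hnorm := eq_one_of_mul_sin_eq hM hi0 hτ hτ' hsin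
  have htype : ∀ i ∈ T, τ i = τ' i := fun i hi =>
    eq_of_sin_pi_mul_div_eq (hb hi).2 (hb' hi).2 (by rw [← hsin i hi, hnorm, one_mul])
  have hc : c = 1 := by
    have h0 := hentry i0 hi0
    rw [(mem_piOn.1 hφ).2 i0 (by simp), (mem_piOn.1 hφ').2 i0 (by simp), ← htype i0 hi0] at h0
    exact mul_right_cancel₀ (pskDiff_ne_zero (hb hi0).1 (by have := hb hi0; omega) 0)
      (h0.trans (one_mul _).symm)
  subst hc
  have hpair : ∀ i ∈ T, τ i = τ' i ∧ φ i = φ' i := fun i hi =>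
    eq_and_eq_of_pskDiff_eq (hb hi).1 (hb hi).2 (hb' hi).2 (hlt φ hφ i hi) (hlt φ' hφ' i hi)
      (by simpa using hentry i hi)
  refine ⟨funext fun i => ?_, funext fun i => ?_⟩ <;> by_cases hi : i ∈ T
  · exact (hpair i hi).1
  · rw [(mem_piOn.1 (Finset.mem_filter.1 hτ).1).2 i hi,
      (mem_piOn.1 (Finset.mem_filter.1 hτ').1).2 i hi]
  · exact (hpair i hi).2
  · have hi' : i ∉ T.erase i0 := fun h => hi (Finset.mem_of_mem_erase h)
    rw [(mem_piOn.1 hφ).2 i hi', (mem_piOn.1 hφ').2 i hi']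

lemma diffLines_eq_image (hM : M = 2 ^ (l + 1)) {T : Finset ι} {i0 : ι} (hi0 : i0 ∈ T) :
    diffLines M T = (fun p : (ι → ℕ) × (ι → ℕ) => Submodule.span ℂ {pskVec M T p.1 p.2}) ''
      ↑(normalTypes M T ×ˢ piOn (T.erase i0) (Finset.range M)) := by
  have hM0 : M ≠ 0 := by rw [hM]; positivity
  have hMeven : Even M := hM ▸ Nat.even_pow.2 ⟨even_two, l.succ_ne_zero⟩
  ext W
  simp only [diffLines, Set.mem_ofPred_eq, Set.mem_image, Finset.coe_product, Set.mem_prod,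
    Finset.mem_coe, Prod.exists]
  constructor
  · rintro ⟨x, hx, hT, rfl⟩
    obtain ⟨τ, hτ, φ, hφ, rfl⟩ := exists_pskVec_eq hMeven hM0 hx hT
    obtain ⟨c₁, hc₁, φ', hφ', h₁⟩ := exists_smul_pskVec_eq_normal_phases hM0 hi0 τ hφ
    obtain ⟨c₂, hc₂, τ', hτ', h₂⟩ := exists_smul_pskVec_eq_normal_types hi0 hτ φ'
    refine ⟨τ', φ', ⟨hτ', hφ'⟩, (Submodule.span_singleton_eq_span_singleton.2
      ⟨Units.mk0 (c₂ * c₁) (mul_ne_zero hc₂ hc₁), ?_⟩).symm⟩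
    rw [Units.smul_mk0, mul_smul, h₁, h₂]
  · rintro ⟨τ, φ, ⟨hτ, -⟩, rfl⟩
    exact ⟨pskVec M T τ φ, pskVec_mem_diffSet hM0 T τ φ,
      pskVec_ne_zero_iff (Finset.mem_filter.1 hτ).1 φ, rfl⟩

lemma diffLines_finite (hM : M = 2 ^ (l + 1)) {T : Finset ι} (hT : T.Nonempty) :
    (diffLines M T).Finite := by
  obtain ⟨i0, hi0⟩ := hT
  rw [diffLines_eq_image hM hi0]
  exact (Finset.finite_toSet _).image _

lemma ncard_diffLines (hM : M = 2 ^ (l + 1)) {T : Finset ι} (hT : T.Nonempty) :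
    (diffLines M T).ncard = ((M / 2) ^ T.card - M / 2 + 1) * M ^ (T.card - 1) := by
  obtain ⟨i0, hi0⟩ := hT
  rw [diffLines_eq_image hM hi0, Set.InjOn.ncard_image, Set.ncard_coe_finset,
    Finset.card_product, card_normalTypes M ⟨i0, hi0⟩, card_piOn, Finset.card_range,
    Finset.card_erase_of_mem hi0]
  · have hM2 : M / 2 = 2 ^ l := by rw [hM, pow_succ, Nat.mul_div_cancel _ two_pos]
    have := Nat.le_self_pow (Finset.card_ne_zero.2 ⟨i0, hi0⟩) (M / 2)
    have : 1 ≤ M / 2 := hM2 ▸ Nat.one_le_two_pow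
    congr 1
    omega
  · rintro ⟨τ, φ⟩ hp ⟨τ', φ'⟩ hp' h
    rw [Finset.mem_coe, Finset.mem_product] at hp hp'
    obtain ⟨c, hc⟩ := Submodule.span_singleton_eq_span_singleton.1 h
    obtain ⟨rfl, rfl⟩ := eq_of_smul_pskVec_eq hM hi0 hp.1 hp'.1 hp.2 hp'.2 hc
    rfl

end Vectors

section TwoSided

variable (α β : Type*) [Fintype α] [Fintype β] [DecidableEq α] [DecidableEq β]

def twoSidedSubsets (k : ℕ) : Finset (Finset (α ⊕ β)) :=
  (Finset.powersetCard k Finset.univ).filter fun T => (∃ a, Sum.inl a ∈ T) ∧ ∃ b, Sum.inr b ∈ T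

variable {α β}

lemma card_twoSidedSubsets {k : ℕ} (hk : 1 ≤ k) :
    (twoSidedSubsets α β k).card =
      (Fintype.card α + Fintype.card β).choose k - (Fintype.card α).choose k -
        (Fintype.card β).choose k := by
  have hcompl : (Finset.powersetCard k Finset.univ).filter
      (fun T : Finset (α ⊕ β) => ¬((∃ a, Sum.inl a ∈ T) ∧ ∃ b, Sum.inr b ∈ T)) =
      Finset.powersetCard k (Finset.univ.map .inl) ∪
        Finset.powersetCard k (Finset.univ.map .inr) := by
    ext T
    have subset_inl : T ⊆ Finset.univ.map .inl ↔ ∀ b, Sum.inr b ∉ T :=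
      ⟨fun h b hb => by simpa using h hb, fun h x hx => by cases x <;> simp_all⟩
    have subset_inr : T ⊆ Finset.univ.map .inr ↔ ∀ a, Sum.inl a ∉ T :=
      ⟨fun h a ha => by simpa using h ha, fun h x hx => by cases x <;> simp_all⟩
    simp only [Finset.mem_filter, Finset.mem_union, Finset.mem_powersetCard, Finset.subset_univ,
      true_and, not_and_or, not_exists, subset_inl, subset_inr]
    tauto
  have hdisj : Disjoint (Finset.powersetCard k (Finset.univ.map (.inl : α ↪ α ⊕ β)))
      (Finset.powersetCard k (Finset.univ.map (.inr : β ↪ α ⊕ β))) := by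
    refine Finset.disjoint_left.2 fun T hl hr => ?_
    rw [Finset.mem_powersetCard] at hl hr
    obtain ⟨x, hx⟩ := Finset.card_pos.1 (hl.2 ▸ hk)
    have hxl := hl.1 hx
    have hxr := hr.1 hx
    cases x <;> simp at hxl hxr
  have := Finset.card_filter_add_card_filter_not (s := Finset.powersetCard k Finset.univ)
    (p := fun T : Finset (α ⊕ β) => (∃ a, Sum.inl a ∈ T) ∧ ∃ b, Sum.inr b ∈ T)
  rw [hcompl, Finset.card_union_of_disjoint hdisj, Finset.card_powersetCard,
    Finset.card_powersetCard, Finset.card_powersetCard, Finset.card_map, Finset.card_map,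
    Finset.card_univ, Finset.card_univ, Finset.card_univ, Fintype.card_sum] at this
  unfold twoSidedSubsets
  omega

lemma nonempty_and_card_of_mem_twoSidedSubsets {k : ℕ} {T : Finset (α ⊕ β)}
    (hT : T ∈ twoSidedSubsets α β k) : T.Nonempty ∧ T.card = k := by
  obtain ⟨hcard, ⟨a, ha⟩, -⟩ := Finset.mem_filter.1 hT
  exact ⟨⟨_, ha⟩, Finset.mem_powersetCard_univ.1 hcard⟩

lemma setOf_eq_biUnion_diffLines (M k : ℕ) :
    {W : Submodule ℂ (α ⊕ β → ℂ) | ∃ x : α ⊕ β → ℂ, (∀ i, x i ∈ diffSet M) ∧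
        (x ∘ Sum.inl) ≠ 0 ∧ (x ∘ Sum.inr) ≠ 0 ∧ {i | x i ≠ 0}.ncard = k ∧
        W = Submodule.span ℂ {x}} =
      ⋃ T ∈ (twoSidedSubsets α β k : Set (Finset (α ⊕ β))), diffLines M T := by
  ext W
  simp only [Set.mem_ofPred_eq, Set.mem_iUnion, Finset.mem_coe, twoSidedSubsets, Finset.mem_filter,
    Finset.mem_powersetCard_univ, diffLines, exists_prop]
  constructor
  · rintro ⟨x, hx, hA, hB, hk, rfl⟩
    obtain ⟨a, ha⟩ := Function.ne_iff.1 hA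
    obtain ⟨b, hb⟩ := Function.ne_iff.1 hB
    refine ⟨Finset.univ.filter (x · ≠ 0), ⟨?_, ⟨a, by simpa using ha⟩, ⟨b, by simpa using hb⟩⟩,
      x, hx, fun i => by simp, rfl⟩
    rw [← hk, Set.ncard_eq_toFinset_card', Set.toFinset_ofPred]
  · rintro ⟨T, ⟨hk, ⟨a, ha⟩, ⟨b, hb⟩⟩, x, hx, hT, rfl⟩
    refine ⟨x, hx, fun h => (hT _).2 ha (congrFun h a), fun h => (hT _).2 hb (congrFun h b), ?_,
      rfl⟩
    rw [show {i | x i ≠ 0} = ↑T from Set.ext hT, Set.ncard_coe_finset, hk]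

end TwoSided

theorem card_removable_spans_general (lam : ℕ) (hlam : 1 ≤ lam) (M : ℕ) (hM : M = 2 ^ lam)
    (nA nB k : ℕ) (hk : 2 ≤ k) :
    {W : Submodule ℂ (Fin nA ⊕ Fin nB → ℂ) |
        ∃ x : Fin nA ⊕ Fin nB → ℂ, (∀ i, x i ∈ diffSet M) ∧
          (x ∘ Sum.inl) ≠ 0 ∧ (x ∘ Sum.inr) ≠ 0 ∧
          {i | x i ≠ 0}.ncard = k ∧ W = Submodule.span ℂ {x}}.ncard =
      ((nA + nB).choose k - nA.choose k - nB.choose k) *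
        ((M / 2) ^ k - M / 2 + 1) * M ^ (k - 1) := by
  obtain ⟨l, rfl⟩ : ∃ l, lam = l + 1 := ⟨lam - 1, by omega⟩
  have hsupp := fun T (hT : T ∈ twoSidedSubsets (Fin nA) (Fin nB) k) =>
    nonempty_and_card_of_mem_twoSidedSubsets hT
  rw [setOf_eq_biUnion_diffLines, (Finset.finite_toSet _).ncard_biUnion
      (fun T hT => diffLines_finite hM (hsupp T hT).1)
      ((pairwise_disjoint_diffLines M).set_pairwise _),
    finsum_mem_coe_finset, Finset.sum_congr rfl fun T hT => by
      rw [ncard_diffLines hM (hsupp T hT).1, (hsupp T hT).2],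
    Finset.sum_const, smul_eq_mul, card_twoSidedSubsets (by omega), Fintype.card_fin,
    Fintype.card_fin, mul_assoc]

theorem card_removable_spans (lam : ℕ) (hlam : 1 ≤ lam) (M : ℕ) (hM : M = 2 ^ lam)
    (nA nB k : ℕ) (hnA : 1 ≤ nA) (hnB : 1 ≤ nB) (hk : 2 ≤ k) (hk' : k ≤ nA + nB) :
    {W : Submodule ℂ (Fin nA ⊕ Fin nB → ℂ) |
        ∃ x : Fin nA ⊕ Fin nB → ℂ, (∀ i, x i ∈ diffSet M) ∧
          (x ∘ Sum.inl) ≠ 0 ∧ (x ∘ Sum.inr) ≠ 0 ∧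
          {i | x i ≠ 0}.ncard = k ∧ W = Submodule.span ℂ {x}}.ncard =
      ((nA + nB).choose k - nA.choose k - nB.choose k) *
        ((M / 2) ^ k - M / 2 + 1) * M ^ (k - 1) :=
  card_removable_spans_general lam hlam M hM nA nB k hk
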